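/- arXiv:1605.06839 — 7 statements merged into one kernel-verified Lean document; each statement's English description precedes it below -/
import Mathlib

section
/- For every integer n ≥ 1 and every s ∈ (0,1), the Heisenberg distortion coefficient τ_s^n is strictly increasing on [0,2π): for all θ₁, θ₂ with 0 ≤ θ₁ < θ₂ < 2π one has τ_s^n(θ₁) < τ_s^n(θ₂). -/
/-!
Put `x = θ / 2` and `g x = sin x - x * cos x`. Then `(τ_s^n θ) ^ (2n+1)` equals
`s * (sin (s x) / sin x) ^ (2n-1) * g (s x) / g x`, and at `θ = 0` it equals the same expression
with the two ratios replaced by their limits `s` and `s ^ 3` as `x → 0`. So it suffices that for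
`f = sin` (order `k = 1` at `0`) and `f = g` (order `k = 3`) the ratio `f (s x) / f x` increases
on `(0, π)` and exceeds `s ^ k` there. The first holds because `y f' y / f y` decreases, the
second because `y f' y < k f y`; for `f = g` both reduce, after at most two further
differentiations, to the positivity of `g`.
-/

open Real

/-- The Heisenberg distortion coefficient `τ_s^n` on `[0, 2π)`. -/
noncomputable def heisenbergTau (n : ℕ) (s θ : ℝ) : ℝ :=
  if θ = 0 then s ^ ((2 * (n : ℝ) + 3) / (2 * (n : ℝ) + 1))
  else
    s ^ ((1 : ℝ) / (2 * (n : ℝ) + 1)) *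
      (Real.sin (θ * s / 2) / Real.sin (θ / 2)) ^ ((2 * (n : ℝ) - 1) / (2 * (n : ℝ) + 1)) *
      ((Real.sin (θ * s / 2) - (θ * s / 2) * Real.cos (θ * s / 2)) /
          (Real.sin (θ / 2) - (θ / 2) * Real.cos (θ / 2))) ^ ((1 : ℝ) / (2 * (n : ℝ) + 1))

open Set

section Calculus

variable {f f' : ℝ → ℝ}

theorem strictMonoOn_Ioo_of_hasDerivAt_pos {a b : ℝ}
    (hf : ∀ x ∈ Ioo a b, HasDerivAt f (f' x) x) (hf' : ∀ x ∈ Ioo a b, 0 < f' x) :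
    StrictMonoOn f (Ioo a b) :=
  strictMonoOn_of_hasDerivWithinAt_pos (convex_Ioo a b)
    (fun x hx ↦ (hf x hx).continuousAt.continuousWithinAt)
    (by simpa only [interior_Ioo] using fun x hx ↦ (hf x hx).hasDerivWithinAt)
    (by simpa only [interior_Ioo] using hf')

theorem strictAntiOn_Ioo_of_hasDerivAt_neg {a b : ℝ}
    (hf : ∀ x ∈ Ioo a b, HasDerivAt f (f' x) x) (hf' : ∀ x ∈ Ioo a b, f' x < 0) :
    StrictAntiOn f (Ioo a b) :=
  strictAntiOn_of_hasDerivWithinAt_neg (convex_Ioo a b)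
    (fun x hx ↦ (hf x hx).continuousAt.continuousWithinAt)
    (by simpa only [interior_Ioo] using fun x hx ↦ (hf x hx).hasDerivWithinAt)
    (by simpa only [interior_Ioo] using hf')

theorem pos_of_hasDerivAt_pos_of_eq_zero {a : ℝ} (hf : ∀ x, HasDerivAt f (f' x) x)
    (h0 : f 0 = 0) (hf' : ∀ x ∈ Ioo 0 a, 0 < f' x) : ∀ x ∈ Ioo 0 a, 0 < f x := by
  intro x hx
  have hmono : StrictMonoOn f (Ico 0 a) :=
    strictMonoOn_of_hasDerivWithinAt_pos (convex_Ico 0 a)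
      (fun y _ ↦ (hf y).continuousAt.continuousWithinAt)
      (by simpa only [interior_Ico] using fun y _ ↦ (hf y).hasDerivWithinAt)
      (by simpa only [interior_Ico] using hf')
  simpa only [h0] using
    hmono (left_mem_Ico.2 (hx.1.trans hx.2)) (Ioo_subset_Ico_self hx) hx.1

end Calculus

theorem mul_mem_Ioo_of_mem_Ioo {s a x : ℝ} (hs : s ∈ Ioo 0 1) (hx : x ∈ Ioo 0 a) :
    s * x ∈ Ioo 0 a :=
  ⟨mul_pos hs.1 hx.1, (mul_lt_of_lt_one_left hx.1 hs.2).trans hx.2⟩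

/-- The value `s ^ k` at `0` is the limit of `f (s * x) / f x` when `f` vanishes to order `k`
at `0`. -/
noncomputable def distortionRatio (f : ℝ → ℝ) (k : ℕ) (s x : ℝ) : ℝ :=
  if x = 0 then s ^ k else f (s * x) / f x

section DistortionRatio

variable {f f' : ℝ → ℝ} {a s : ℝ} {k : ℕ}

/-- The logarithmic derivative of `x ↦ f (s * x) / f x` is `(φ (s * x) - φ x) / x`, where
`φ y = y * f' y / f y`. -/
theorem strictMonoOn_div_comp_mul (hf : ∀ x ∈ Ioo 0 a, HasDerivAt f (f' x) x)
    (hpos : ∀ x ∈ Ioo 0 a, 0 < f x) (hφ : StrictAntiOn (fun y ↦ y * f' y / f y) (Ioo 0 a))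
    (hs : s ∈ Ioo 0 1) : StrictMonoOn (fun x ↦ f (s * x) / f x) (Ioo 0 a) := by
  refine strictMonoOn_Ioo_of_hasDerivAt_pos (fun x hx ↦
    ((hf _ (mul_mem_Ioo_of_mem_Ioo hs hx)).comp x (hasDerivAt_const_mul s)).div (hf x hx)
      (hpos x hx).ne') fun x hx ↦ div_pos ?_ (pow_pos (hpos x hx) 2)
  have hsx := mul_mem_Ioo_of_mem_Ioo hs hx
  have h := hφ hsx hx (mul_lt_of_lt_one_left hx.1 hs.2)
  rw [div_lt_div_iff₀ (hpos x hx) (hpos _ hsx)] at h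
  show 0 < f' (s * x) * s * f x - f (s * x) * f' x
  refine (mul_pos_iff_of_pos_left hx.1).1 ?_
  linear_combination h

theorem pow_mul_lt_comp_mul (hf : ∀ x ∈ Ioo 0 a, HasDerivAt f (f' x) x)
    (hk : ∀ y ∈ Ioo 0 a, y * f' y < k * f y) (hs : s ∈ Ioo 0 1) {x : ℝ} (hx : x ∈ Ioo 0 a) :
    s ^ k * f x < f (s * x) := by
  have hanti : StrictAntiOn (fun y ↦ f y / y ^ k) (Ioo 0 a) := by
    refine strictAntiOn_Ioo_of_hasDerivAt_neg (fun y hy ↦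
      (hf y hy).div (hasDerivAt_pow k y) (pow_pos hy.1 k).ne') fun y hy ↦
        div_neg_of_neg_of_pos ?_ (by have := hy.1; positivity)
    have hy0 := hy.1
    have hkey : y * (f' y * y ^ k - f y * (k * y ^ (k - 1))) = y ^ k * (y * f' y - k * f y) := by
      rcases k with _ | k
      · simp
      · simp only [Nat.add_sub_cancel]; push_cast; ring
    refine (neg_of_mul_neg_right (a := y) ?_ hy0.le)
    rw [hkey]
    exact mul_neg_of_pos_of_neg (by positivity) (sub_neg.2 (hk y hy))
  have hsx := mul_mem_Ioo_of_mem_Ioo hs hx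
  have h := hanti hsx hx (mul_lt_of_lt_one_left hx.1 hs.2)
  have hxk : 0 < x ^ k := pow_pos hx.1 k
  have hsk : 0 < s ^ k := pow_pos hs.1 k
  simp only at h
  rw [mul_pow, div_lt_div_iff₀ hxk (mul_pos hsk hxk)] at h
  nlinarith

theorem distortionRatio_pos (hpos : ∀ x ∈ Ioo 0 a, 0 < f x) (hs : s ∈ Ioo 0 1) {x : ℝ}
    (hx : x ∈ Ico 0 a) : 0 < distortionRatio f k s x := by
  rcases hx.1.eq_or_lt with rfl | hx0
  · simpa [distortionRatio] using pow_pos hs.1 k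
  · have hx' : x ∈ Ioo 0 a := ⟨hx0, hx.2⟩
    rw [distortionRatio, if_neg hx0.ne']
    exact div_pos (hpos _ (mul_mem_Ioo_of_mem_Ioo hs hx')) (hpos x hx')

theorem strictMonoOn_distortionRatio (hf : ∀ x ∈ Ioo 0 a, HasDerivAt f (f' x) x)
    (hpos : ∀ x ∈ Ioo 0 a, 0 < f x) (hφ : StrictAntiOn (fun y ↦ y * f' y / f y) (Ioo 0 a))
    (hk : ∀ y ∈ Ioo 0 a, y * f' y < k * f y) (hs : s ∈ Ioo 0 1) :
    StrictMonoOn (distortionRatio f k s) (Ico 0 a) := by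
  intro x hx y hy hxy
  have hy' : y ∈ Ioo 0 a := ⟨hx.1.trans_lt hxy, hy.2⟩
  rcases hx.1.eq_or_lt with rfl | hx0
  · rw [distortionRatio, distortionRatio, if_pos rfl, if_neg hy'.1.ne', lt_div_iff₀ (hpos y hy')]
    exact pow_mul_lt_comp_mul hf hk hs hy'
  · rw [distortionRatio, distortionRatio, if_neg hx0.ne', if_neg hy'.1.ne']
    exact strictMonoOn_div_comp_mul hf hpos hφ hs ⟨hx0, hx.2⟩ hy' hxy

end DistortionRatio

theorem strictAntiOn_mul_cos_div_sin : StrictAntiOn (fun y ↦ y * cos y / sin y) (Ioo 0 π) := by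
  refine strictAntiOn_Ioo_of_hasDerivAt_neg (fun y hy ↦
    ((hasDerivAt_id' y).mul (hasDerivAt_cos y)).div (hasDerivAt_sin y)
      (sin_pos_of_pos_of_lt_pi hy.1 hy.2).ne') fun y hy ↦ ?_
  have hsin := sin_pos_of_pos_of_lt_pi hy.1 hy.2
  have hnum : (1 * cos y + y * -sin y) * sin y - y * cos y * cos y = sin y * cos y - y := by
    linear_combination (-y) * sin_sq_add_cos_sq y
  show ((1 * cos y + y * -sin y) * sin y - y * cos y * cos y) / sin y ^ 2 < 0
  rw [hnum]
  refine div_neg_of_neg_of_pos ?_ (pow_pos hsin 2)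
  nlinarith [cos_le_one y, sin_lt hy.1]

noncomputable def sinSubMulCos (x : ℝ) : ℝ := sin x - x * cos x

theorem hasDerivAt_sinSubMulCos (x : ℝ) : HasDerivAt sinSubMulCos (x * sin x) x :=
  ((hasDerivAt_sin x).sub ((hasDerivAt_id' x).mul (hasDerivAt_cos x))).congr_deriv (by ring)

theorem sinSubMulCos_pos {x : ℝ} (hx : x ∈ Ioo 0 π) : 0 < sinSubMulCos x :=
  pos_of_hasDerivAt_pos_of_eq_zero hasDerivAt_sinSubMulCos (by simp [sinSubMulCos])
    (fun y hy ↦ mul_pos hy.1 (sin_pos_of_pos_of_lt_pi hy.1 hy.2)) x hx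

theorem strictMonoOn_distortionRatio_sin {s : ℝ} (hs : s ∈ Ioo 0 1) :
    StrictMonoOn (distortionRatio sin 1 s) (Ico 0 π) :=
  strictMonoOn_distortionRatio (fun x _ ↦ hasDerivAt_sin x)
    (fun x hx ↦ sin_pos_of_pos_of_lt_pi hx.1 hx.2) strictAntiOn_mul_cos_div_sin
    (fun y hy ↦ by have := sinSubMulCos_pos hy; rw [sinSubMulCos] at this; push_cast; linarith) hs

theorem two_mul_sin_sq_sub_mul_sin_mul_cos_lt_sq {x : ℝ} (hx : x ∈ Ioo 0 π) :
    2 * sin x ^ 2 - x * sin x * cos x < x ^ 2 := by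
  have hd2 : ∀ y, HasDerivAt (fun y ↦ 2 * y - 3 * sin y * cos y + y * cos y ^ 2 - y * sin y ^ 2)
      (4 * sin y * sinSubMulCos y) y := fun y ↦ by
    have hsin := (hasDerivAt_id' y).sin
    have hcos := (hasDerivAt_id' y).cos
    have h := ((((hasDerivAt_id' y).const_mul 2).sub ((hsin.const_mul 3).mul hcos)).add
      ((hasDerivAt_id' y).mul (hcos.pow 2))).sub ((hasDerivAt_id' y).mul (hsin.pow 2))
    refine h.congr_deriv ?_
    simp only [sinSubMulCos]
    norm_num
    linear_combination -2 * sin_sq_add_cos_sq y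
  have hd1 : ∀ y, HasDerivAt (fun y ↦ y ^ 2 + y * sin y * cos y - 2 * sin y ^ 2)
      (2 * y - 3 * sin y * cos y + y * cos y ^ 2 - y * sin y ^ 2) y := fun y ↦ by
    have hsin := (hasDerivAt_id' y).sin
    have hcos := (hasDerivAt_id' y).cos
    have h := ((hasDerivAt_pow 2 y).add (((hasDerivAt_id' y).mul hsin).mul hcos)).sub
      ((hsin.pow 2).const_mul 2)
    refine h.congr_deriv ?_
    norm_num
    ring
  have h1 := pos_of_hasDerivAt_pos_of_eq_zero hd2 (by simp) fun z hz ↦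
    mul_pos (mul_pos four_pos (sin_pos_of_pos_of_lt_pi hz.1 hz.2)) (sinSubMulCos_pos hz)
  have := pos_of_hasDerivAt_pos_of_eq_zero hd1 (by simp) h1 x hx
  linarith

theorem strictAntiOn_mul_mul_sin_div_sinSubMulCos :
    StrictAntiOn (fun y ↦ y * (y * sin y) / sinSubMulCos y) (Ioo 0 π) := by
  refine strictAntiOn_Ioo_of_hasDerivAt_neg (fun y hy ↦
    ((hasDerivAt_id' y).mul ((hasDerivAt_id' y).mul (hasDerivAt_sin y))).div
      (hasDerivAt_sinSubMulCos y) (sinSubMulCos_pos hy).ne') fun y hy ↦ ?_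
  have hnum : (1 * (y * sin y) + y * (1 * sin y + y * cos y)) * sinSubMulCos y
      - y * (y * sin y) * (y * sin y) = -(y * (y ^ 2 - (2 * sin y ^ 2 - y * sin y * cos y))) := by
    simp only [sinSubMulCos]
    linear_combination (-y ^ 3) * sin_sq_add_cos_sq y
  show ((1 * (y * sin y) + y * (1 * sin y + y * cos y)) * sinSubMulCos y
      - y * (y * sin y) * (y * sin y)) / sinSubMulCos y ^ 2 < 0
  rw [hnum]
  refine div_neg_of_neg_of_pos (neg_neg_of_pos (mul_pos hy.1 ?_)) (pow_pos (sinSubMulCos_pos hy) 2)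
  exact sub_pos.2 (two_mul_sin_sq_sub_mul_sin_mul_cos_lt_sq hy)

theorem mul_mul_sin_lt_three_mul_sinSubMulCos {x : ℝ} (hx : x ∈ Ioo 0 π) :
    x * (x * sin x) < 3 * sinSubMulCos x := by
  have hd : ∀ y, HasDerivAt (fun y ↦ 3 * sinSubMulCos y - y * (y * sin y))
      (y * sinSubMulCos y) y := fun y ↦ by
    have h := ((hasDerivAt_sinSubMulCos y).const_mul 3).sub
      ((hasDerivAt_id' y).mul ((hasDerivAt_id' y).mul (hasDerivAt_sin y)))
    refine h.congr_deriv ?_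
    simp only [sinSubMulCos, Pi.mul_apply]
    ring
  have := pos_of_hasDerivAt_pos_of_eq_zero hd (by simp [sinSubMulCos])
    (fun y hy ↦ mul_pos hy.1 (sinSubMulCos_pos hy)) x hx
  linarith

theorem strictMonoOn_distortionRatio_sinSubMulCos {s : ℝ} (hs : s ∈ Ioo 0 1) :
    StrictMonoOn (distortionRatio sinSubMulCos 3 s) (Ico 0 π) :=
  strictMonoOn_distortionRatio (fun x _ ↦ hasDerivAt_sinSubMulCos x)
    (fun _ hx ↦ sinSubMulCos_pos hx) strictAntiOn_mul_mul_sin_div_sinSubMulCos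
    (fun _ hy ↦ by exact_mod_cast mul_mul_sin_lt_three_mul_sinSubMulCos hy) hs

theorem heisenbergTau_eq_rpow {n : ℕ} (hn : 1 ≤ n) {s θ : ℝ} (hs : s ∈ Ioo 0 1)
    (hθ : θ ∈ Ico 0 (2 * π)) :
    heisenbergTau n s θ = (s * distortionRatio sin 1 s (θ / 2) ^ (2 * n - 1) *
      distortionRatio sinSubMulCos 3 s (θ / 2)) ^ ((1 : ℝ) / (2 * n + 1)) := by
  have hm : ((2 * n - 1 : ℕ) : ℝ) = 2 * n - 1 := by
    rw [Nat.cast_sub (by omega)]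
    push_cast
    ring
  rcases hθ.1.eq_or_lt with rfl | hθ0
  · have hpow : s * (s ^ 1) ^ (2 * n - 1) * s ^ 3 = s ^ (2 * n + 3) := by
      rw [pow_one, ← pow_succ', ← pow_add]
      congr 1
      omega
    rw [heisenbergTau, distortionRatio, distortionRatio, if_pos rfl, zero_div, if_pos rfl,
      if_pos rfl, hpow, ← rpow_natCast, ← rpow_mul hs.1.le]
    congr 1
    push_cast
    field_simp
  · have hx : θ / 2 ∈ Ioo 0 π := ⟨by linarith, by linarith [hθ.2]⟩
    have hsx := mul_mem_Ioo_of_mem_Ioo hs hx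
    have hsin : 0 ≤ sin (s * (θ / 2)) / sin (θ / 2) :=
      (div_pos (sin_pos_of_pos_of_lt_pi hsx.1 hsx.2) (sin_pos_of_pos_of_lt_pi hx.1 hx.2)).le
    have hG : 0 ≤ sinSubMulCos (s * (θ / 2)) / sinSubMulCos (θ / 2) :=
      (div_pos (sinSubMulCos_pos hsx) (sinSubMulCos_pos hx)).le
    rw [heisenbergTau, distortionRatio, distortionRatio, if_neg hθ0.ne', if_neg hx.1.ne',
      if_neg hx.1.ne', mul_rpow (mul_nonneg hs.1.le (pow_nonneg hsin _)) hG,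
      mul_rpow hs.1.le (pow_nonneg hsin _), ← rpow_natCast,
      ← rpow_mul hsin, hm, mul_one_div, show θ * s / 2 = s * (θ / 2) by ring, sinSubMulCos,
      sinSubMulCos]

/-- For every integer `n ≥ 1` and every `s ∈ (0,1)`, the Heisenberg distortion coefficient
`τ_s^n` is strictly increasing on `[0, 2π)`. -/
theorem heisenbergTau_strictMono (n : ℕ) (hn : 1 ≤ n) (s : ℝ) (hs : s ∈ Set.Ioo (0 : ℝ) 1)
    (θ₁ θ₂ : ℝ) (hθ₁ : 0 ≤ θ₁) (h12 : θ₁ < θ₂) (hθ₂ : θ₂ < 2 * Real.pi) :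
    heisenbergTau n s θ₁ < heisenbergTau n s θ₂ := by
  have hθ₁' : θ₁ ∈ Ico 0 (2 * π) := ⟨hθ₁, h12.trans hθ₂⟩
  have hθ₂' : θ₂ ∈ Ico 0 (2 * π) := ⟨hθ₁.trans h12.le, hθ₂⟩
  have half : ∀ θ ∈ Ico 0 (2 * π), θ / 2 ∈ Ico 0 π := fun θ hθ ↦
    ⟨by linarith [hθ.1], by linarith [hθ.2]⟩
  have hlt : θ₁ / 2 < θ₂ / 2 := by linarith
  have hA := strictMonoOn_distortionRatio_sin hs (half _ hθ₁') (half _ hθ₂') hlt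
  have hB := strictMonoOn_distortionRatio_sinSubMulCos hs (half _ hθ₁') (half _ hθ₂') hlt
  have hA₀ : 0 < distortionRatio sin 1 s (θ₁ / 2) :=
    distortionRatio_pos (fun _ hx ↦ sin_pos_of_pos_of_lt_pi hx.1 hx.2) hs (half _ hθ₁')
  have hB₀ : 0 < distortionRatio sinSubMulCos 3 s (θ₁ / 2) :=
    distortionRatio_pos (fun _ hx ↦ sinSubMulCos_pos hx) hs (half _ hθ₁')
  rw [heisenbergTau_eq_rpow hn hs hθ₁', heisenbergTau_eq_rpow hn hs hθ₂']
  have hs₀ := hs.1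
  refine rpow_lt_rpow (by positivity) ?_ (by positivity)
  gcongr
  omega
end

section
/- For every s ∈ (0,1), the function t ↦ sin(st)/sin(t) is strictly increasing on the open interval (0,π). -/
/-!
The derivative of `sin (s t) / sin t` is `W t / sin² t`, where `W` is the Wronskian of `sin` and
`t ↦ sin (s t)`. Since both solve `y'' = -c y` with different constants, `W' = (1 - s²) sin (s t) sin t`,
which is positive on `(0, π)`; as `W 0 = 0`, the Wronskian, hence the derivative, is positive there.
-/

open Real Set

noncomputable def sinWronskian (s t : ℝ) : ℝ :=
  sin t * (s * cos (s * t)) - cos t * sin (s * t)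

lemma hasDerivAt_sin_const_mul (s t : ℝ) :
    HasDerivAt (fun t ↦ sin (s * t)) (s * cos (s * t)) t := by
  simpa [mul_comm] using ((hasDerivAt_id t).const_mul s).sin

lemma hasDerivAt_cos_const_mul (s t : ℝ) :
    HasDerivAt (fun t ↦ cos (s * t)) (-(s * sin (s * t))) t := by
  simpa [mul_comm] using ((hasDerivAt_id t).const_mul s).cos

lemma hasDerivAt_sinWronskian (s t : ℝ) :
    HasDerivAt (sinWronskian s) ((1 - s ^ 2) * sin (s * t) * sin t) t := by
  have h := ((hasDerivAt_sin t).mul ((hasDerivAt_cos_const_mul s t).const_mul s)).sub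
    ((hasDerivAt_cos t).mul (hasDerivAt_sin_const_mul s t))
  exact h.congr_deriv (by ring)

lemma sinWronskian_zero_right (s : ℝ) : sinWronskian s 0 = 0 := by
  simp [sinWronskian]

lemma sin_const_mul_pos {s t : ℝ} (hs : s ∈ Ioo (0 : ℝ) 1) (ht : t ∈ Ioo 0 π) :
    0 < sin (s * t) := by
  apply sin_pos_of_pos_of_lt_pi (mul_pos hs.1 ht.1)
  nlinarith [hs.2, ht.1, ht.2]

lemma sinWronskian_pos {s t : ℝ} (hs : s ∈ Ioo (0 : ℝ) 1) (ht : t ∈ Ioo 0 π) :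
    0 < sinWronskian s t := by
  have hmono : StrictMonoOn (sinWronskian s) (Icc 0 π) := by
    refine strictMonoOn_of_deriv_pos (convex_Icc 0 π)
      (fun x _ ↦ (hasDerivAt_sinWronskian s x).continuousAt.continuousWithinAt) fun x hx ↦ ?_
    rw [interior_Icc] at hx
    have hs2 : 0 < 1 - s ^ 2 := by nlinarith [hs.1, hs.2]
    rw [(hasDerivAt_sinWronskian s x).deriv]
    have := sin_const_mul_pos hs hx
    have := sin_pos_of_pos_of_lt_pi hx.1 hx.2
    positivity
  simpa [sinWronskian_zero_right] using
    hmono (left_mem_Icc.2 pi_pos.le) (Ioo_subset_Icc_self ht) ht.1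

lemma hasDerivAt_sin_const_mul_div_sin (s : ℝ) {t : ℝ} (ht : sin t ≠ 0) :
    HasDerivAt (fun t ↦ sin (s * t) / sin t) (sinWronskian s t / sin t ^ 2) t := by
  have h := (hasDerivAt_sin_const_mul s t).div (hasDerivAt_sin t) ht
  exact h.congr_deriv (by rw [sinWronskian]; ring)

/-- For every `s ∈ (0,1)`, the function `t ↦ sin(s t)/sin t` is strictly increasing on `(0, π)`. -/
theorem strictMonoOn_sin_ratio (s : ℝ) (hs : s ∈ Set.Ioo (0 : ℝ) 1) :
    StrictMonoOn (fun t : ℝ => Real.sin (s * t) / Real.sin t) (Set.Ioo 0 Real.pi) := by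
  have hsin : ∀ t ∈ Ioo 0 π, sin t ≠ 0 := fun t ht ↦ (sin_pos_of_pos_of_lt_pi ht.1 ht.2).ne'
  refine strictMonoOn_of_deriv_pos (convex_Ioo 0 π)
    (fun t ht ↦ (hasDerivAt_sin_const_mul_div_sin s (hsin t ht)).continuousAt.continuousWithinAt)
    fun t ht ↦ ?_
  rw [interior_Ioo] at ht
  rw [(hasDerivAt_sin_const_mul_div_sin s (hsin t ht)).deriv]
  have := sinWronskian_pos hs ht
  have := hsin t ht
  positivity
end

section
/- For every s ∈ (0,1), the function t ↦ (sin(st) − s·t·cos(st))/(sin(t) − t·cos(t)) is strictly increasing on the open interval (0,π). -/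
/-!
Write `F t = sin t - t cos t`, so that `F' t = t sin t`. The derivative of `F (s t) / F t` is
positive exactly when the elasticity `t F'(t) / F(t) = t² sin t / F(t)` is larger at `s t` than
at `t`, so it suffices that this elasticity decreases on `(0, π)`. Its derivative is
`-t Q(t) / F(t)²` with `Q t = t² + t sin t cos t - 2 sin² t`, and `Q > 0` on `(0, π)` because
`Q 0 = Q' 0 = 0` and `Q'' t = 4 sin t F(t) > 0`.
-/

open Real Set

lemma pos_of_map_zero_of_hasDerivAt_pos {g g' : ℝ → ℝ} {a x : ℝ}
    (hg : ∀ y, HasDerivAt g (g' y) y) (hg0 : g 0 = 0) (hg' : ∀ y ∈ Ioo 0 a, 0 < g' y)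
    (hx : x ∈ Ioo 0 a) : 0 < g x := by
  have hmono : StrictMonoOn g (Icc 0 a) :=
    strictMonoOn_of_hasDerivWithinAt_pos (convex_Icc 0 a)
      (fun y _ => (hg y).continuousAt.continuousWithinAt)
      (fun y _ => (hg y).hasDerivWithinAt) (by simpa only [interior_Icc] using hg')
  simpa only [hg0] using
    hmono (left_mem_Icc.2 (hx.1.trans hx.2).le) (Ioo_subset_Icc_self hx) hx.1

lemma strictMonoOn_div_comp_mul_of_strictAntiOn {F F' : ℝ → ℝ} {a s : ℝ} (hs0 : 0 < s)
    (hs1 : s < 1) (hF : ∀ x ∈ Ioo 0 a, HasDerivAt F (F' x) x) (hF0 : ∀ x ∈ Ioo 0 a, 0 < F x)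
    (hanti : StrictAntiOn (fun x => x * F' x / F x) (Ioo 0 a)) :
    StrictMonoOn (fun t => F (s * t) / F t) (Ioo 0 a) := by
  have hst : ∀ t ∈ Ioo 0 a, s * t ∈ Ioo 0 a := fun t ht =>
    ⟨mul_pos hs0 ht.1, (mul_lt_of_lt_one_left ht.1 hs1).trans ht.2⟩
  have hderiv : ∀ t ∈ Ioo 0 a, HasDerivAt (fun t => F (s * t) / F t)
      ((F' (s * t) * s * F t - F (s * t) * F' t) / F t ^ 2) t := fun t ht =>
    ((hF _ (hst t ht)).comp t (hasDerivAt_const_mul s)).div (hF t ht) (hF0 t ht).ne'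
  refine strictMonoOn_of_hasDerivWithinAt_pos (convex_Ioo 0 a)
    (fun t ht => (hderiv t ht).continuousAt.continuousWithinAt)
    (fun t ht => (hderiv t (interior_subset ht)).hasDerivWithinAt) fun t ht => ?_
  rw [interior_Ioo] at ht
  have hlt := hanti (hst t ht) ht (mul_lt_of_lt_one_left ht.1 hs1)
  rw [div_lt_div_iff₀ (hF0 t ht) (hF0 _ (hst t ht))] at hlt
  have hFt := hF0 t ht
  have key : t * (F (s * t) * F' t) < t * (F' (s * t) * s * F t) := by linarith
  exact div_pos (sub_pos.2 (lt_of_mul_lt_mul_left key ht.1.le)) (by positivity)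

namespace Real

lemma hasDerivAt_sin_sub_mul_cos (x : ℝ) :
    HasDerivAt (fun x => sin x - x * cos x) (x * sin x) x :=
  ((hasDerivAt_sin x).sub ((hasDerivAt_id' x).fun_mul (hasDerivAt_cos x))).congr_deriv (by ring)

lemma sin_sub_mul_cos_pos {x : ℝ} (hx : x ∈ Ioo 0 π) : 0 < sin x - x * cos x :=
  pos_of_map_zero_of_hasDerivAt_pos (g := fun x => sin x - x * cos x)
    hasDerivAt_sin_sub_mul_cos (by simp) (fun y hy => mul_pos hy.1 (sin_pos_of_mem_Ioo hy)) hx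

lemma sq_add_mul_sin_mul_cos_sub_two_mul_sin_sq_pos {x : ℝ} (hx : x ∈ Ioo 0 π) :
    0 < x ^ 2 + x * sin x * cos x - 2 * sin x ^ 2 := by
  set Q' := fun x => 2 * x - 3 * sin x * cos x + x * cos x ^ 2 - x * sin x ^ 2
  have hQ' (y : ℝ) :
      HasDerivAt (fun x => x ^ 2 + x * sin x * cos x - 2 * sin x ^ 2) (Q' y) y :=
    ((((hasDerivAt_id' y).fun_pow 2).add (((hasDerivAt_id' y).fun_mul (hasDerivAt_sin y)).fun_mul
      (hasDerivAt_cos y))).sub (((hasDerivAt_sin y).fun_pow 2).const_mul 2)).congr_deriv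
      (by push_cast; ring)
  have hQ'' (y : ℝ) : HasDerivAt Q' (4 * sin y * (sin y - y * cos y)) y :=
    (((((hasDerivAt_id' y).const_mul 2).sub (((hasDerivAt_sin y).const_mul 3).fun_mul
      (hasDerivAt_cos y))).add ((hasDerivAt_id' y).fun_mul ((hasDerivAt_cos y).fun_pow 2))).sub
      ((hasDerivAt_id' y).fun_mul ((hasDerivAt_sin y).fun_pow 2))).congr_deriv
      (by push_cast; linear_combination (-2 : ℝ) * sin_sq_add_cos_sq y)
  have hQ'_pos (y : ℝ) (hy : y ∈ Ioo 0 π) : 0 < Q' y :=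
    pos_of_map_zero_of_hasDerivAt_pos hQ'' (by simp [Q'])
      (fun z hz => mul_pos (mul_pos four_pos (sin_pos_of_mem_Ioo hz)) (sin_sub_mul_cos_pos hz)) hy
  exact pos_of_map_zero_of_hasDerivAt_pos
    (g := fun x => x ^ 2 + x * sin x * cos x - 2 * sin x ^ 2) hQ' (by simp) hQ'_pos hx

lemma strictAntiOn_mul_mul_sin_div_sin_sub_mul_cos :
    StrictAntiOn (fun x => x * (x * sin x) / (sin x - x * cos x)) (Ioo 0 π) := by
  have hderiv : ∀ x ∈ Ioo 0 π, HasDerivAt (fun x => x * (x * sin x) / (sin x - x * cos x))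
      (-(x * (x ^ 2 + x * sin x * cos x - 2 * sin x ^ 2)) / (sin x - x * cos x) ^ 2) x :=
    fun x hx => (((hasDerivAt_id' x).fun_mul ((hasDerivAt_id' x).fun_mul (hasDerivAt_sin x))).div
      (hasDerivAt_sin_sub_mul_cos x) (sin_sub_mul_cos_pos hx).ne').congr_deriv
      (by linear_combination (-x ^ 3 / (sin x - x * cos x) ^ 2) * sin_sq_add_cos_sq x)
  refine strictAntiOn_of_hasDerivWithinAt_neg (convex_Ioo 0 π)
    (fun x hx => (hderiv x hx).continuousAt.continuousWithinAt)
    (fun x hx => (hderiv x (interior_subset hx)).hasDerivWithinAt) fun x hx => ?_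
  rw [interior_Ioo] at hx
  have hQ := sq_add_mul_sin_mul_cos_sub_two_mul_sin_sq_pos hx
  have hF := sin_sub_mul_cos_pos hx
  exact div_neg_of_neg_of_pos (neg_neg_of_pos (mul_pos hx.1 hQ)) (by positivity)

end Real

/-- For every `s ∈ (0,1)`, the function
`t ↦ (sin(s t) − s t cos(s t)) / (sin t − t cos t)` is strictly increasing on `(0, π)`. -/
theorem strictMonoOn_sin_sub_cos_ratio (s : ℝ) (hs : s ∈ Set.Ioo (0 : ℝ) 1) :
    StrictMonoOn
      (fun t : ℝ =>
        (Real.sin (s * t) - s * t * Real.cos (s * t)) / (Real.sin t - t * Real.cos t))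
      (Set.Ioo 0 Real.pi) :=
  strictMonoOn_div_comp_mul_of_strictAntiOn (F := fun x => sin x - x * cos x) hs.1 hs.2
    (fun x _ => hasDerivAt_sin_sub_mul_cos x) (fun _ hx => sin_sub_mul_cos_pos hx)
    strictAntiOn_mul_mul_sin_div_sin_sub_mul_cos
end

section
/- For every s ∈ (0,1) and every t ∈ (0,π), one has the identity s·cot(s·t) − cot(t) = 2π²·t·(1−s²)·Σ_{k=1}^∞ k²/((π²k² − t²)·(π²k² − s²t²)), where the series on the right-hand side converges. -/
/-!
Both cotangents have the Mittag-Leffler expansion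
`cot x - 1/x = ∑_{k ≥ 1} 2x / (x² - π²k²)`, valid whenever `sin x ≠ 0`.
In `s cot(st) - cot t` the principal parts `1/t` cancel, and the two series combine
termwise into `2π² t (1 - s²)` times the series of the statement.
-/

open Real

namespace Real

theorem hasSum_pi_mul_cot_pi_mul_sub_inv {x : ℝ} (hx : ∀ n : ℤ, (n : ℝ) ≠ x) :
    HasSum (fun n : ℕ => 1 / (x - (n + 1)) + 1 / (x + (n + 1))) (π * cot (π * x) - 1 / x) := by
  have hz : (x : ℂ) ∈ Complex.integerComplement := by
    rintro ⟨n, hn⟩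
    exact hx n (by exact_mod_cast hn)
  rw [← Complex.hasSum_ofReal]
  push_cast [Complex.ofReal_cot, Complex.ofReal_mul]
  exact cot_series_rep' hz ▸ (summable_cotTerm hz).hasSum

theorem hasSum_cot_sub_inv {t : ℝ} (ht : sin t ≠ 0) :
    HasSum (fun n : ℕ => 2 * t / (t ^ 2 - (π * (n + 1)) ^ 2)) (cot t - 1 / t) := by
  obtain ⟨x, rfl⟩ : ∃ x, π * x = t := ⟨t / π, by field_simp⟩
  have hx : ∀ n : ℤ, (n : ℝ) ≠ x := by
    rintro n rfl
    exact ht (sin_eq_zero_iff.mpr ⟨n, mul_comm _ _⟩)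
  have key := (hasSum_pi_mul_cot_pi_mul_sub_inv hx).mul_left π⁻¹
  rw [show π⁻¹ * (π * cot (π * x) - 1 / x) = cot (π * x) - 1 / (π * x) by field_simp] at key
  refine key.congr_fun fun n => ?_
  have h₁ : x - (n + 1) ≠ 0 := sub_ne_zero.mpr (by exact_mod_cast (hx (n + 1)).symm)
  have h₂ : x + (n + 1) ≠ 0 := by
    rw [← sub_neg_eq_add]
    exact sub_ne_zero.mpr (by exact_mod_cast (hx (-(n + 1))).symm)
  have h₃ : x ^ 2 - (n + 1) ^ 2 ≠ 0 := by
    rw [sq_sub_sq, mul_comm]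
    exact mul_ne_zero h₁ h₂
  field_simp
  ring

end Real

theorem mul_two_mul_div_sub_two_mul_div {s t c m : ℝ} (h₁ : c ^ 2 * m ^ 2 - t ^ 2 ≠ 0)
    (h₂ : c ^ 2 * m ^ 2 - s ^ 2 * t ^ 2 ≠ 0) :
    s * (2 * (s * t) / ((s * t) ^ 2 - (c * m) ^ 2)) - 2 * t / (t ^ 2 - (c * m) ^ 2) =
      2 * c ^ 2 * t * (1 - s ^ 2) *
        (m ^ 2 / ((c ^ 2 * m ^ 2 - t ^ 2) * (c ^ 2 * m ^ 2 - s ^ 2 * t ^ 2))) := by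
  rw [show t ^ 2 - (c * m) ^ 2 = -(c ^ 2 * m ^ 2 - t ^ 2) by ring,
    show (s * t) ^ 2 - (c * m) ^ 2 = -(c ^ 2 * m ^ 2 - s ^ 2 * t ^ 2) by ring, div_neg, div_neg]
  field_simp
  ring

/-- Mittag-Leffler-type identity: for `s ∈ (0,1)` and `t ∈ (0,π)`,
`s cot(s t) − cot t = 2π² t (1−s²) Σ_{k≥1} k² / ((π²k² − t²)(π²k² − s²t²))`,
and the series converges. -/
theorem cot_diff_series (s t : ℝ) (hs : s ∈ Set.Ioo (0 : ℝ) 1) (ht : t ∈ Set.Ioo 0 Real.pi) :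
    Summable (fun k : ℕ =>
      ((k : ℝ) + 1) ^ 2 /
        ((Real.pi ^ 2 * ((k : ℝ) + 1) ^ 2 - t ^ 2) *
          (Real.pi ^ 2 * ((k : ℝ) + 1) ^ 2 - s ^ 2 * t ^ 2))) ∧
    s * Real.cot (s * t) - Real.cot t =
      2 * Real.pi ^ 2 * t * (1 - s ^ 2) *
        ∑' k : ℕ,
          ((k : ℝ) + 1) ^ 2 /
            ((Real.pi ^ 2 * ((k : ℝ) + 1) ^ 2 - t ^ 2) *
              (Real.pi ^ 2 * ((k : ℝ) + 1) ^ 2 - s ^ 2 * t ^ 2)) := by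
  obtain ⟨hs0, hs1⟩ := hs
  obtain ⟨ht0, htπ⟩ := ht
  have hst : s * t < t := mul_lt_of_lt_one_left ht0 hs1
  have hC : 2 * π ^ 2 * t * (1 - s ^ 2) ≠ 0 := by
    have : 0 < 1 - s ^ 2 := by nlinarith
    positivity
  have hden : ∀ k : ℕ, 0 < π ^ 2 * ((k : ℝ) + 1) ^ 2 - s ^ 2 * t ^ 2 ∧
      0 < π ^ 2 * ((k : ℝ) + 1) ^ 2 - t ^ 2 := by
    intro k
    have : π ≤ π * ((k : ℝ) + 1) :=
      le_mul_of_one_le_right pi_pos.le (by linarith [(k.cast_nonneg : (0 : ℝ) ≤ k)])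
    constructor <;> nlinarith [mul_pos hs0 ht0]
  have hsin_st : sin (s * t) ≠ 0 := (sin_pos_of_pos_of_lt_pi (mul_pos hs0 ht0) (hst.trans htπ)).ne'
  have hsin_t : sin t ≠ 0 := (sin_pos_of_pos_of_lt_pi ht0 htπ).ne'
  have hsum := ((hasSum_cot_sub_inv hsin_st).mul_left s).sub (hasSum_cot_sub_inv hsin_t)
  rw [show s * (cot (s * t) - 1 / (s * t)) - (cot t - 1 / t) = s * cot (s * t) - cot t by
    field_simp; ring, ← mul_div_cancel₀ (s * cot (s * t) - cot t) hC] at hsum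
  have hf := (hasSum_mul_left_iff hC).mp <| hsum.congr_fun fun k =>
    (mul_two_mul_div_sub_two_mul_div (hden k).2.ne' (hden k).1.ne').symm
  exact ⟨hf.summable, by rw [hf.tsum_eq, mul_div_cancel₀ _ hC]⟩
end

section
/- For every s ∈ (0,1) and every t ∈ (0,π), one has cot(t) < s·cot(s·t). -/
/-!
The function `x ↦ x cot x` is strictly decreasing on `(0, π)`: its derivative is
`(sin x cos x - x) / sin² x`, and `sin x cos x = sin (2x) / 2 < x`. Comparing its values at
`s t < t` and dividing by `t > 0` gives the inequality.
-/

open Real Set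

namespace Real

theorem hasDerivAt_cot {x : ℝ} (hx : sin x ≠ 0) : HasDerivAt cot (-1 / sin x ^ 2) x := by
  have hcot : cot = fun y => cos y / sin y := funext cot_eq_cos_div_sin
  rw [hcot]
  refine ((hasDerivAt_cos x).div (hasDerivAt_sin x) hx).congr_deriv ?_
  rw [← sin_sq_add_cos_sq x]
  ring

theorem hasDerivAt_mul_cot {x : ℝ} (hx : sin x ≠ 0) :
    HasDerivAt (fun y => y * cot y) ((sin x * cos x - x) / sin x ^ 2) x := by
  refine ((hasDerivAt_id' x).mul (hasDerivAt_cot hx)).congr_deriv ?_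
  rw [cot_eq_cos_div_sin]
  field_simp
  ring

theorem sin_mul_cos_lt_self {x : ℝ} (hx : 0 < x) : sin x * cos x < x := by
  have h := sin_lt (by positivity : 0 < 2 * x)
  rw [sin_two_mul] at h
  linarith

theorem strictAntiOn_mul_cot : StrictAntiOn (fun x => x * cot x) (Ioo 0 π) := by
  have hsin : ∀ x ∈ Ioo 0 π, 0 < sin x := fun x hx => sin_pos_of_pos_of_lt_pi hx.1 hx.2
  refine strictAntiOn_of_hasDerivWithinAt_neg (convex_Ioo 0 π)
    (fun x hx => (hasDerivAt_mul_cot (hsin x hx).ne').continuousAt.continuousWithinAt)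
    (fun x hx => (hasDerivAt_mul_cot (hsin x (interior_subset hx)).ne').hasDerivWithinAt)
    (fun x hx => ?_)
  rw [interior_Ioo] at hx
  have := hsin x hx
  exact div_neg_of_neg_of_pos (sub_neg.2 (sin_mul_cos_lt_self hx.1)) (by positivity)

end Real

/-- For every `s ∈ (0,1)` and every `t ∈ (0,π)`, one has `cot t < s · cot(s t)`. -/
theorem cot_lt_smul_cot (s t : ℝ) (hs : s ∈ Set.Ioo (0 : ℝ) 1) (ht : t ∈ Set.Ioo 0 Real.pi) :
    Real.cot t < s * Real.cot (s * t) := by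
  obtain ⟨hs0, hs1⟩ := hs
  obtain ⟨ht0, htπ⟩ := ht
  have hst_lt : s * t < t := mul_lt_of_lt_one_left ht0 hs1
  have hst : s * t ∈ Ioo 0 π := ⟨mul_pos hs0 ht0, hst_lt.trans htπ⟩
  have key : t * cot t < s * t * cot (s * t) := strictAntiOn_mul_cot hst ⟨ht0, htπ⟩ hst_lt
  refine lt_of_mul_lt_mul_left ?_ ht0.le
  linarith
end

section
/- Let n ≥ 1 be an integer, t > 0 and 0 < r < √t/2. Let χ ∈ ℂⁿ \ {0} and θ ∈ (0,2π), and set ζ = i·((e^{−iθ} − 1)/θ)·χ ∈ ℂⁿ and τ = 2|χ|²·(θ − sin θ)/θ² ∈ ℝ. If |ζ| ≤ r and √|τ − t| ≤ r, then sin(θ/2) ≤ r·√(8π/(3t)). -/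
/-! The endpoint satisfies `|ζ| = (2 sin(θ/2)/θ)·|χ|` and `τ θ² = 2|χ|²(θ − sin θ)`; eliminating
`|χ|` gives `2 sin²(θ/2)·τ ≤ r²(θ − sin θ) ≤ 4π r²`, while the Korányi condition
`|τ − t| ≤ r² < t/4` forces `τ > 3t/4`. -/

theorem Complex.norm_exp_neg_I_mul_ofReal_sub_one (θ : ℝ) :
    ‖Complex.exp (-Complex.I * θ) - 1‖ = 2 * |Real.sin (θ / 2)| := by
  have h := Complex.norm_exp_I_mul_ofReal_sub_one (-θ)
  rw [Complex.ofReal_neg, mul_neg, ← neg_mul] at h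
  rw [h, norm_mul, Real.norm_two, neg_div, Real.sin_neg, norm_neg, Real.norm_eq_abs]

theorem norm_I_mul_exp_neg_I_mul_sub_one_div_smul {E : Type*} [NormedAddCommGroup E]
    [NormedSpace ℂ E] (θ : ℝ) (χ : E) :
    ‖(Complex.I * ((Complex.exp (-Complex.I * θ) - 1) / θ)) • χ‖
      = 2 * |Real.sin (θ / 2)| / |θ| * ‖χ‖ := by
  rw [norm_smul, norm_mul, Complex.norm_I, one_mul, norm_div,
    Complex.norm_exp_neg_I_mul_ofReal_sub_one, Complex.norm_real, Real.norm_eq_abs]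

theorem two_mul_sin_half_sq_mul_le {θ c r τ : ℝ} (hθ : 0 < θ)
    (hc : 2 * |Real.sin (θ / 2)| / θ * c ≤ r) (hc₀ : 0 ≤ c)
    (hτ : τ = 2 * c ^ 2 * (θ - Real.sin θ) / θ ^ 2) :
    2 * Real.sin (θ / 2) ^ 2 * τ ≤ r ^ 2 * (θ - Real.sin θ) := by
  have hsin : 0 ≤ θ - Real.sin θ := sub_nonneg.2 (Real.sin_le hθ.le)
  have hlin : 2 * |Real.sin (θ / 2)| * c ≤ r * θ := by
    rwa [div_mul_eq_mul_div, div_le_iff₀ hθ] at hc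
  have hsq : 4 * Real.sin (θ / 2) ^ 2 * c ^ 2 ≤ r ^ 2 * θ ^ 2 := by
    have := pow_le_pow_left₀ (by positivity) hlin 2
    rw [mul_pow, mul_pow, mul_pow, sq_abs] at this
    linarith
  have hτθ : τ * θ ^ 2 = 2 * c ^ 2 * (θ - Real.sin θ) := by
    rw [hτ]; field_simp
  have : 2 * Real.sin (θ / 2) ^ 2 * τ * θ ^ 2 ≤ r ^ 2 * (θ - Real.sin θ) * θ ^ 2 := by
    calc 2 * Real.sin (θ / 2) ^ 2 * τ * θ ^ 2
        = 4 * Real.sin (θ / 2) ^ 2 * c ^ 2 * (θ - Real.sin θ) := by rw [mul_assoc _ τ, hτθ]; ring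
      _ ≤ r ^ 2 * θ ^ 2 * (θ - Real.sin θ) := mul_le_mul_of_nonneg_right hsq hsin
      _ = r ^ 2 * (θ - Real.sin θ) * θ ^ 2 := by ring
  exact le_of_mul_le_mul_right this (by positivity)

theorem heisenberg_koranyi_angle_estimate_general (n : ℕ) (t r : ℝ)
    (hr : r < Real.sqrt t / 2)
    (χ : EuclideanSpace ℂ (Fin n)) (θ : ℝ) (hθ : θ ∈ Set.Ioo 0 (2 * Real.pi))
    (ζ : EuclideanSpace ℂ (Fin n))
    (hζ : ζ = (Complex.I * ((Complex.exp (-Complex.I * (θ : ℂ)) - 1) / (θ : ℂ))) • χ)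
    (τ : ℝ) (hτ : τ = 2 * ‖χ‖ ^ 2 * (θ - Real.sin θ) / θ ^ 2)
    (h₁ : ‖ζ‖ ≤ r) (h₂ : Real.sqrt |τ - t| ≤ r) :
    Real.sin (θ / 2) ≤ r * Real.sqrt (8 * Real.pi / (3 * t)) := by
  obtain ⟨hθ₀, hθ2π⟩ := hθ
  have hr₀ : 0 ≤ r := (norm_nonneg ζ).trans h₁
  have hrt : (2 * r) ^ 2 < t := (Real.lt_sqrt (by positivity)).1 (by linarith)
  have ht : 0 < t := (sq_nonneg _).trans_lt hrt
  have hτt : |τ - t| ≤ r ^ 2 := (Real.sqrt_le_left hr₀).1 h₂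
  rw [hζ, norm_I_mul_exp_neg_I_mul_sub_one_div_smul, abs_of_pos hθ₀] at h₁
  have hkey := two_mul_sin_half_sq_mul_le hθ₀ h₁ (norm_nonneg χ) hτ
  have hsin : θ - Real.sin θ ≤ 4 * Real.pi := by
    linarith [Real.neg_one_le_sin θ, Real.pi_gt_three]
  have hsq : Real.sin (θ / 2) ^ 2 ≤ (r * Real.sqrt (8 * Real.pi / (3 * t))) ^ 2 := by
    rw [mul_pow, Real.sq_sqrt (by positivity), ← mul_div_assoc, le_div_iff₀ (by positivity)]
    have hτ₀ : 3 * t / 4 ≤ τ := by linarith [(abs_le.1 hτt).1]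
    nlinarith [mul_le_mul_of_nonneg_left hτ₀ (sq_nonneg (Real.sin (θ / 2))),
      mul_le_mul_of_nonneg_left hsin (sq_nonneg r)]
  exact (abs_le_of_sq_le_sq' hsq (by positivity)).2

/-- Korányi-ball estimate: if the endpoint `Γ_1(χ,θ) = (ζ,τ)` of a Heisenberg geodesic with
parameters `χ ≠ 0`, `θ ∈ (0,2π)` lies in the Korányi ball of radius `r < √t/2` centered at
`(0, t)` (i.e. `|ζ| ≤ r` and `√|τ − t| ≤ r`), then `sin(θ/2) ≤ r·√(8π/(3t))`. -/
theorem heisenberg_koranyi_angle_estimate (n : ℕ) (hn : 1 ≤ n) (t r : ℝ) (ht : 0 < t)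
    (hr₀ : 0 < r) (hr : r < Real.sqrt t / 2)
    (χ : EuclideanSpace ℂ (Fin n)) (hχ : χ ≠ 0) (θ : ℝ) (hθ : θ ∈ Set.Ioo 0 (2 * Real.pi))
    (ζ : EuclideanSpace ℂ (Fin n))
    (hζ : ζ = (Complex.I * ((Complex.exp (-Complex.I * (θ : ℂ)) - 1) / (θ : ℂ))) • χ)
    (τ : ℝ) (hτ : τ = 2 * ‖χ‖ ^ 2 * (θ - Real.sin θ) / θ ^ 2)
    (h₁ : ‖ζ‖ ≤ r) (h₂ : Real.sqrt |τ - t| ≤ r) :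
    Real.sin (θ / 2) ≤ r * Real.sqrt (8 * Real.pi / (3 * t)) :=
  heisenberg_koranyi_angle_estimate_general n t r hr χ θ hθ ζ hζ τ hτ h₁ h₂
end

section
/- For every θ ∈ (0, 2π], one has 0 < θ − sin θ ≤ θ²/π; equivalently, (θ − sin θ)/θ² ∈ (0, 1/π]. -/
/-!
The upper bound is equivalent to `θ (π - θ) ≤ π sin θ`, which we prove for all `θ ≥ 0`.
By the symmetry `θ ↦ π - θ` it suffices on `[0, π/2]` to combine `sin θ ≥ θ - θ³/6`
(good for `θ ≤ π - 2`) with Jordan's inequality `sin θ ≥ 2θ/π` (good for `θ ≥ π - 2`).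
Beyond `π` the left side is negative and `sin θ ≥ π - θ` suffices.
-/

open Real

namespace Real

variable {x : ℝ}

lemma mul_pi_sub_le_pi_mul_sin_of_le_pi_div_two (hx₀ : 0 ≤ x) (hx : x ≤ π / 2) :
    x * (π - x) ≤ π * sin x := by
  rcases le_total x (π - 2) with hsmall | hlarge
  · have hcube := mul_le_mul_of_nonneg_left (sin_ge_sub_cube hx₀) pi_pos.le
    have hπx : π * x ≤ 6 := by nlinarith [pi_lt_d2, pi_pos]
    nlinarith [mul_nonneg (mul_nonneg hx₀ hx₀) (sub_nonneg.2 hπx)]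
  · have hjordan := mul_le_mul_of_nonneg_left (mul_le_sin hx₀ hx) pi_pos.le
    rw [← mul_assoc, mul_div_cancel₀ _ pi_ne_zero] at hjordan
    nlinarith

lemma mul_pi_sub_le_pi_mul_sin_of_le_pi (hx₀ : 0 ≤ x) (hx : x ≤ π) :
    x * (π - x) ≤ π * sin x := by
  rcases le_total x (π / 2) with hle | hge
  · exact mul_pi_sub_le_pi_mul_sin_of_le_pi_div_two hx₀ hle
  · have h := mul_pi_sub_le_pi_mul_sin_of_le_pi_div_two (x := π - x) (by linarith) (by linarith)
    rwa [sin_pi_sub, sub_sub_cancel, mul_comm (π - x)] at h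

lemma pi_sub_le_sin_of_pi_le (hx : π ≤ x) : π - x ≤ sin x := by
  have h := sin_le (sub_nonneg.2 hx)
  rw [sin_sub_pi] at h
  linarith

lemma mul_pi_sub_le_pi_mul_sin (hx : 0 ≤ x) : x * (π - x) ≤ π * sin x := by
  rcases le_total x π with hle | hge
  · exact mul_pi_sub_le_pi_mul_sin_of_le_pi hx hle
  · nlinarith [mul_le_mul_of_nonneg_left (pi_sub_le_sin_of_pi_le hge) pi_pos.le]

lemma sub_sin_le_sq_div_pi (hx : 0 ≤ x) : x - sin x ≤ x ^ 2 / π := by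
  rw [le_div_iff₀ pi_pos]
  linarith [mul_pi_sub_le_pi_mul_sin hx]

end Real

/-- For every `θ ∈ (0, 2π]`, one has `0 < θ − sin θ ≤ θ²/π`. -/
theorem sub_sin_pos_and_le (θ : ℝ) (hθ : θ ∈ Set.Ioc 0 (2 * Real.pi)) :
    0 < θ - Real.sin θ ∧ θ - Real.sin θ ≤ θ ^ 2 / Real.pi :=
  ⟨sub_pos.2 (sin_lt hθ.1), sub_sin_le_sq_div_pi hθ.1.le⟩
end
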